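/- Let C and ℓ be integers with 2 ≤ ℓ < C, let r_1, …, r_ℓ be nonnegative reals, and define the top-k-aware Fano scaling functions S_{F_k} as above. Suppose I ⊆ (0,1] is an interval on which S_{F_{ℓ−1}} is strictly decreasing, and Π_ℓ, Π_{ℓ−1} ∈ I satisfy Σ_{i=1}^{ℓ} r_i·Π_ℓ ≤ 1 and S_{F_ℓ}(Π_ℓ) = S_{F_{ℓ−1}}(Π_{ℓ−1}). Then Π_ℓ ≤ Π_{ℓ−1}; that is, solving the entropy equation with the top-ℓ-aware scaling form yields a tighter (smaller) predictability upper bound than the top-(ℓ−1)-aware form, so the bounds form a decreasing chain in ℓ. -/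
import Mathlib


lemma key (t a N : ℝ) (ht : 0 ≤ t) (hta : t ≤ a) (hN : 1 ≤ N) :
    a * Real.log a + (a - t) * Real.log N ≤
      t * Real.log t + (a - t) * Real.log (a - t) + a * Real.log (N + 1) := by
  have ha0 : 0 ≤ a := le_trans ht hta
  have hN0 : 0 < N := lt_of_lt_of_le one_pos hN
  have hN1 : (0:ℝ) ≤ Real.log (N + 1) := Real.log_nonneg (by linarith)
  rcases eq_or_lt_of_le ha0 with h0 | ha
  · have h1 : t = 0 := le_antisymm (h0 ▸ hta) ht
    simp [← h0, h1]
  rcases eq_or_lt_of_le ht with ht0 | ht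
  · rw [← ht0]
    have hlog : Real.log N ≤ Real.log (N + 1) :=
      Real.log_le_log hN0 (by linarith)
    simp only [sub_zero, zero_mul]
    nlinarith
  rcases eq_or_lt_of_le hta with hta0 | hta
  · rw [hta0]
    simp only [sub_self, zero_mul, Real.log_zero, mul_zero]
    nlinarith
  · set u := a - t with hu
    clear_value u
    have hu0 : 0 < u := by rw [hu]; linarith
    have h1 : Real.log (a / ((N+1)*t)) ≤ a/((N+1)*t) - 1 :=
      Real.log_le_sub_one_of_pos (by positivity)
    have h2 : Real.log (a*N / ((N+1)*u)) ≤ a*N/((N+1)*u) - 1 :=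
      Real.log_le_sub_one_of_pos (by positivity)
    rw [Real.log_div (by positivity) (by positivity),
        Real.log_mul (by positivity) (by positivity)] at h1
    rw [Real.log_div (by positivity) (by positivity),
        Real.log_mul (by positivity) (by positivity),
        Real.log_mul (by positivity) (by positivity)] at h2
    have H := add_le_add (mul_le_mul_of_nonneg_left h1 ht.le)
      (mul_le_mul_of_nonneg_left h2 hu0.le)
    have e1 : t * (a/((N+1)*t) - 1) = a/(N+1) - t := by field_simp
    have e2 : u * (a*N/((N+1)*u) - 1) = a*N/(N+1) - u := by field_simp
    have e3 : a/(N+1) + a*N/(N+1) = a := by field_simp; ring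
    have ha' : a = t + u := by rw [hu]; ring
    rw [e1, e2] at H
    have Hx : a * Real.log a = t * Real.log a + u * Real.log a := by rw [ha']; ring
    have Hy : a * Real.log (N+1) = t * Real.log (N+1) + u * Real.log (N+1) := by
      rw [ha']; ring
    linarith [H, Hx, Hy, e3, ha']

/-- The top-`k`-aware Fano scaling function
`S_{F_k}(Π) = -∑_{i=1}^k (rᵢΠ)·log₂(rᵢΠ) - (1-∑_{i=1}^k rᵢΠ)·log₂(1-∑_{i=1}^k rᵢΠ)
              + (1-∑_{i=1}^k rᵢΠ)·log₂(C-k)`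
(with the convention `0·log₂ 0 = 0`, automatic since `Real.logb 2 0 = 0`). -/
noncomputable def SFk (C k : ℕ) (r : ℕ → ℝ) (P : ℝ) : ℝ :=
  -(∑ i ∈ Finset.Icc 1 k, r i * P * Real.logb 2 (r i * P))
    - (1 - ∑ i ∈ Finset.Icc 1 k, r i * P) * Real.logb 2 (1 - ∑ i ∈ Finset.Icc 1 k, r i * P)
    + (1 - ∑ i ∈ Finset.Icc 1 k, r i * P) * Real.logb 2 ((C : ℝ) - (k : ℝ))

/-- Let `2 ≤ ℓ < C`, let `rᵢ ≥ 0`, and let `I ⊆ (0,1]` be an interval on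
which `S_{F_{ℓ-1}}` is strictly decreasing. If `Πℓ, Πℓ₁ ∈ I` satisfy `∑_{i=1}^ℓ rᵢ·Πℓ ≤ 1`
and `S_{F_ℓ}(Πℓ) = S_{F_{ℓ-1}}(Πℓ₁)`, then `Πℓ ≤ Πℓ₁`: the top-`ℓ`-aware scaling form yields
a tighter predictability upper bound than the top-`(ℓ-1)`-aware form. -/
theorem stmt_11 (C ℓ : ℕ) (hℓ : 2 ≤ ℓ) (hℓC : ℓ < C)
    (r : ℕ → ℝ) (hr : ∀ i, 0 ≤ r i)
    (I : Set ℝ) (hIsub : I ⊆ Set.Ioc (0 : ℝ) 1) (hIconn : I.OrdConnected)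
    (hanti : StrictAntiOn (SFk C (ℓ - 1) r) I)
    (Pl Pl1 : ℝ) (hPl : Pl ∈ I) (hPl1 : Pl1 ∈ I)
    (hsum : ∑ i ∈ Finset.Icc 1 ℓ, r i * Pl ≤ 1)
    (heq : SFk C ℓ r Pl = SFk C (ℓ - 1) r Pl1) :
    Pl ≤ Pl1 := by
  have hPl0 : 0 < Pl := (hIsub hPl).1
  obtain ⟨m, rfl⟩ : ∃ m, ℓ = m + 1 := ⟨ℓ - 1, by omega⟩
  have hm1 : 1 ≤ m := by omega
  have hsplit : ∀ f : ℕ → ℝ, ∑ i ∈ Finset.Icc 1 (m + 1), f i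
      = (∑ i ∈ Finset.Icc 1 m, f i) + f (m + 1) := by
    intro f
    exact Finset.sum_Icc_succ_top (by omega) f
  set s : ℝ := ∑ i ∈ Finset.Icc 1 m, r i * Pl with hs
  set t : ℝ := r (m + 1) * Pl with htdef
  clear_value s t
  have hsum' : s + t ≤ 1 := by
    rw [hsplit (fun i => r i * Pl), ← hs, ← htdef] at hsum; exact hsum
  have ht0 : 0 ≤ t := htdef ▸ mul_nonneg (hr _) hPl0.le
  have hCm : (1:ℝ) ≤ (C:ℝ) - ((m+1:ℕ):ℝ) := by
    push_cast
    have : (m:ℝ) + 2 ≤ (C:ℝ) := by exact_mod_cast hℓC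
    linarith
  have hlog2 : (0:ℝ) < Real.log 2 := Real.log_pos (by norm_num)
  have hle : SFk C (m+1) r Pl ≤ SFk C (m+1-1) r Pl := by
    have K := key t (1-s) ((C:ℝ) - ((m+1:ℕ):ℝ)) ht0 (by linarith) hCm
    have hN1 : (C:ℝ) - ((m+1:ℕ):ℝ) + 1 = (C:ℝ) - ((m:ℕ):ℝ) := by push_cast; ring
    rw [hN1] at K
    show SFk C (m+1) r Pl ≤ SFk C m r Pl
    simp only [SFk, Real.logb]
    rw [hsplit (fun i => r i * Pl * (Real.log (r i * Pl) / Real.log 2)),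
        hsplit (fun i => r i * Pl), ← hs, ← htdef,
        show (1:ℝ) - (s + t) = 1 - s - t from by ring]
    set S : ℝ := ∑ i ∈ Finset.Icc 1 m, r i * Pl * (Real.log (r i * Pl) / Real.log 2) with hS
    clear_value S
    have KK : t * (Real.log t / Real.log 2)
        + (1-s-t) * (Real.log (1-s-t) / Real.log 2)
        + (1-s) * (Real.log ((C:ℝ) - ((m:ℕ):ℝ)) / Real.log 2)
        - ((1-s) * (Real.log (1-s) / Real.log 2)
          + (1-s-t) * (Real.log ((C:ℝ) - ((m+1:ℕ):ℝ)) / Real.log 2))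
        = (t * Real.log t + (1-s-t) * Real.log (1-s-t)
            + (1-s) * Real.log ((C:ℝ) - ((m:ℕ):ℝ))
            - ((1-s) * Real.log (1-s)
              + (1-s-t) * Real.log ((C:ℝ) - ((m+1:ℕ):ℝ)))) / Real.log 2 := by
      ring
    have KK2 : (0:ℝ) ≤ (t * Real.log t + (1-s-t) * Real.log (1-s-t)
            + (1-s) * Real.log ((C:ℝ) - ((m:ℕ):ℝ))
            - ((1-s) * Real.log (1-s)
              + (1-s-t) * Real.log ((C:ℝ) - ((m+1:ℕ):ℝ)))) / Real.log 2 :=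
      div_nonneg (by linarith [K]) hlog2.le
    linarith [KK, KK2]
  have h2 : SFk C (m+1-1) r Pl1 ≤ SFk C (m+1-1) r Pl := by rw [← heq]; exact hle
  by_contra hcon
  push_neg at hcon
  exact absurd (hanti hPl1 hPl hcon) (by linarith)
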